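/- Let ℓ ≥ 0 and s ≥ 0 with ℓ + s > 0, and let u₀ ∈ L²(ℝ³) satisfy ‖∇^ℓ u₀‖_{L²} < ∞ and ‖Λ^{-s} u₀‖_{L²} < ∞. Let u(t) = e^{tΔ} u₀. Then there exists a constant C₀ depending only on ‖∇^ℓ u₀‖_{L²}, ‖Λ^{-s} u₀‖_{L²}, ℓ and s such that for all t ≥ 0: ‖∇^ℓ u(t)‖_{L²}² ≤ C₀ (1+t)^{-(ℓ+s)}. -/

import Mathlib

/-! With `a = ℓ + s` and `m = min (|ξ|², 1)`, the heat multiplier satisfies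
`e^{-8π²|ξ|²t} ≤ e · e^{-m(1+t)} ≤ e (a/e)^a (m(1+t))^{-a}`, because `y^a e^{-y} ≤ (a/e)^a`.
The remaining weight `|ξ|^{2ℓ} m^{-a}` is `|ξ|^{2ℓ}` at high frequencies and `|ξ|^{-2s}` at low
ones, so integrating against `|û₀|²` bounds the energy by
`e (a/e)^a (‖∇^ℓ u₀‖² + ‖Λ^{-s} u₀‖²) (1+t)^{-a}`. -/

open MeasureTheory Real
open scoped FourierTransform

theorem rpow_mul_exp_neg_le {a y : ℝ} (ha : 0 < a) (hy : 0 ≤ y) :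
    y ^ a * exp (-y) ≤ (a / exp 1) ^ a := by
  have hya : a * (y / a * exp (-(y / a))) = y * exp (-(y / a)) := by field_simp
  calc y ^ a * exp (-y) = (a * (y / a * exp (-(y / a)))) ^ a := by
        rw [hya, mul_rpow hy (exp_pos _).le, ← exp_mul, neg_mul, div_mul_cancel₀ y ha.ne']
    _ ≤ (a * exp (-1)) ^ a := by
        gcongr
        exact mul_exp_neg_le_exp_neg_one _
    _ = (a / exp 1) ^ a := by rw [exp_neg, div_eq_mul_inv]

theorem rpow_mul_min_sq_one_rpow_neg_le {ℓ s r : ℝ} (hr : 0 < r) :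
    r ^ (2 * ℓ) * min (r ^ 2) 1 ^ (-(ℓ + s)) ≤ r ^ (2 * ℓ) + r ^ (-(2 * s)) := by
  rcases le_total r 1 with hr1 | hr1
  · have hsq : min (r ^ 2) 1 = r ^ (2 : ℝ) := by
      rw [min_eq_left (pow_le_one₀ hr.le hr1), rpow_two]
    have hexp : 2 * ℓ + 2 * -(ℓ + s) = -(2 * s) := by ring
    rw [hsq, ← rpow_mul hr.le, ← rpow_add hr, hexp]
    exact le_add_of_nonneg_left (rpow_nonneg hr.le _)
  · rw [min_eq_right (one_le_pow₀ hr1), one_rpow, mul_one]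
    exact le_add_of_nonneg_right (rpow_nonneg hr.le _)

theorem rpow_mul_exp_neg_mul_sq_le {κ ℓ s r t : ℝ} (hκ : 1 ≤ κ) (hls : 0 < ℓ + s) (hr : 0 < r)
    (ht : 0 ≤ t) :
    r ^ (2 * ℓ) * exp (-κ * r ^ 2 * t) ≤
      exp 1 * ((ℓ + s) / exp 1) ^ (ℓ + s) * (1 + t) ^ (-(ℓ + s)) *
        (r ^ (2 * ℓ) + r ^ (-(2 * s))) := by
  set a := ℓ + s
  set m := min (r ^ 2) 1
  have hm : 0 < m := lt_min (by positivity) one_pos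
  have hy : 0 < m * (1 + t) := by positivity
  have hexp : exp (-κ * r ^ 2 * t) ≤ exp 1 * exp (-(m * (1 + t))) := by
    rw [← exp_add, exp_le_exp]
    have hmκ : m ≤ κ * r ^ 2 := (min_le_left _ _).trans (le_mul_of_one_le_left (by positivity) hκ)
    nlinarith [min_le_right (r ^ 2) 1, mul_le_mul_of_nonneg_right hmκ ht]
  have hdecay : exp (-(m * (1 + t))) ≤ (a / exp 1) ^ a * (m ^ (-a) * (1 + t) ^ (-a)) := by
    rw [← mul_rpow hm.le (by positivity), rpow_neg hy.le, ← div_eq_mul_inv,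
      le_div_iff₀ (rpow_pos_of_pos hy _), mul_comm]
    exact rpow_mul_exp_neg_le hls hy.le
  calc r ^ (2 * ℓ) * exp (-κ * r ^ 2 * t)
      ≤ r ^ (2 * ℓ) * (exp 1 * ((a / exp 1) ^ a * (m ^ (-a) * (1 + t) ^ (-a)))) := by
        gcongr
        exact hexp.trans (by gcongr)
    _ = exp 1 * (a / exp 1) ^ a * (1 + t) ^ (-a) * (r ^ (2 * ℓ) * m ^ (-a)) := by ring
    _ ≤ exp 1 * (a / exp 1) ^ a * (1 + t) ^ (-a) * (r ^ (2 * ℓ) + r ^ (-(2 * s))) := by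
        gcongr
        exact rpow_mul_min_sq_one_rpow_neg_le hr

theorem heat_flow_algebraic_decay_general (u₀ : EuclideanSpace ℝ (Fin 3) → ℂ)
    (s ℓ : ℝ) (hls : 0 < ℓ + s)
    (hpos : Integrable (fun ξ => ‖ξ‖ ^ (2 * ℓ) * ‖𝓕 u₀ ξ‖ ^ 2))
    (hneg : Integrable (fun ξ => ‖ξ‖ ^ (-(2 * s)) * ‖𝓕 u₀ ξ‖ ^ 2)) :
    ∃ C₀ : ℝ, 0 < C₀ ∧ ∀ t : ℝ, 0 ≤ t →
      (∫ ξ, ‖ξ‖ ^ (2 * ℓ) *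
          ‖Real.exp (-(4 * Real.pi ^ 2) * ‖ξ‖ ^ 2 * t) • 𝓕 u₀ ξ‖ ^ 2) ≤
        C₀ * (1 + t) ^ (-(ℓ + s)) := by
  set K := exp 1 * ((ℓ + s) / exp 1) ^ (ℓ + s)
  set A := ∫ ξ, ‖ξ‖ ^ (2 * ℓ) * ‖𝓕 u₀ ξ‖ ^ 2
  set B := ∫ ξ, ‖ξ‖ ^ (-(2 * s)) * ‖𝓕 u₀ ξ‖ ^ 2
  refine ⟨K * (A + B) + 1, by positivity, fun t ht ↦ ?_⟩
  have hbound : ∀ᵐ ξ : EuclideanSpace ℝ (Fin 3), ‖ξ‖ ^ (2 * ℓ) *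
      ‖exp (-(4 * π ^ 2) * ‖ξ‖ ^ 2 * t) • 𝓕 u₀ ξ‖ ^ 2 ≤
      K * (1 + t) ^ (-(ℓ + s)) *
        (‖ξ‖ ^ (2 * ℓ) * ‖𝓕 u₀ ξ‖ ^ 2 + ‖ξ‖ ^ (-(2 * s)) * ‖𝓕 u₀ ξ‖ ^ 2) := by
    filter_upwards [volume.ae_ne 0] with ξ hξ
    have hsmul : ‖exp (-(4 * π ^ 2) * ‖ξ‖ ^ 2 * t) • 𝓕 u₀ ξ‖ ^ 2 =
        exp (-(8 * π ^ 2) * ‖ξ‖ ^ 2 * t) * ‖𝓕 u₀ ξ‖ ^ 2 := by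
      rw [norm_smul, norm_of_nonneg (exp_pos _).le, mul_pow, sq (exp _), ← exp_add]
      ring_nf
    have hκ : 1 ≤ 8 * π ^ 2 := by nlinarith [pi_gt_three]
    have hmultiplier := rpow_mul_exp_neg_mul_sq_le hκ hls (norm_pos_iff.2 hξ) ht
    rw [hsmul, ← add_mul, ← mul_assoc, ← mul_assoc]
    exact mul_le_mul_of_nonneg_right hmultiplier (by positivity)
  calc (∫ ξ, ‖ξ‖ ^ (2 * ℓ) * ‖exp (-(4 * π ^ 2) * ‖ξ‖ ^ 2 * t) • 𝓕 u₀ ξ‖ ^ 2)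
      ≤ ∫ ξ, K * (1 + t) ^ (-(ℓ + s)) *
          (‖ξ‖ ^ (2 * ℓ) * ‖𝓕 u₀ ξ‖ ^ 2 + ‖ξ‖ ^ (-(2 * s)) * ‖𝓕 u₀ ξ‖ ^ 2) :=
        integral_mono_of_nonneg (.of_forall fun _ ↦ by positivity)
          ((hpos.add hneg).const_mul _) hbound
    _ = K * (A + B) * (1 + t) ^ (-(ℓ + s)) := by
        rw [integral_const_mul, integral_add hpos hneg]
        ring
    _ ≤ (K * (A + B) + 1) * (1 + t) ^ (-(ℓ + s)) := by gcongr; linarith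

/-- Optimal decay for the heat semigroup: if `‖∇^ℓ u₀‖_{L²}, ‖Λ^{-s} u₀‖_{L²} < ∞` with
`ℓ, s ≥ 0`, `ℓ + s > 0`, then `‖∇^ℓ e^{tΔ}u₀‖_{L²}² ≤ C₀ (1+t)^{-(ℓ+s)}`,
stated on the Fourier side where `e^{tΔ}` is multiplication by `e^{-4π²|ξ|²t}`. -/
theorem heat_flow_algebraic_decay (u₀ : EuclideanSpace ℝ (Fin 3) → ℂ)
    (hu₀ : MemLp u₀ 2 volume) (s ℓ : ℝ) (hs : 0 ≤ s) (hℓ : 0 ≤ ℓ) (hls : 0 < ℓ + s)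
    (hpos : Integrable (fun ξ => ‖ξ‖ ^ (2 * ℓ) * ‖𝓕 u₀ ξ‖ ^ 2))
    (hneg : Integrable (fun ξ => ‖ξ‖ ^ (-(2 * s)) * ‖𝓕 u₀ ξ‖ ^ 2)) :
    ∃ C₀ : ℝ, 0 < C₀ ∧ ∀ t : ℝ, 0 ≤ t →
      (∫ ξ, ‖ξ‖ ^ (2 * ℓ) *
          ‖Real.exp (-(4 * Real.pi ^ 2) * ‖ξ‖ ^ 2 * t) • 𝓕 u₀ ξ‖ ^ 2) ≤
        C₀ * (1 + t) ^ (-(ℓ + s)) :=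
  heat_flow_algebraic_decay_general u₀ s ℓ hls hpos hneg
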